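/- For every pair Q, P ∈ {0, …, K−1}, the inner product of μ_Q and ν_P satisfies ⟨μ_Q, ν_P⟩ = 1 − δ_{Q,P}; that is, ⟨μ_Q, ν_Q⟩ = 0 and ⟨μ_Q, ν_P⟩ = 1 whenever Q ≠ P. -/

import Mathlib

open scoped InnerProductSpace

/-- `θ = √(1/2 − √(K−1)/K)`. -/
noncomputable def theta (K : ℕ) : ℝ :=
  Real.sqrt (1 / 2 - Real.sqrt ((K : ℝ) - 1) / K)

/-- `μ_Q = √(2(K−1)/K) · ( −θ·e_Q + (√(1−θ²)/√(K−1)) · Σ_{P ≠ Q} e_P )` in `ℂ^K`. -/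
noncomputable def muVec (K : ℕ) (Q : Fin K) : EuclideanSpace ℂ (Fin K) :=
  ((Real.sqrt (2 * ((K : ℝ) - 1) / K) : ℝ) : ℂ) •
    (((-theta K : ℝ) : ℂ) • EuclideanSpace.single Q (1 : ℂ)
      + ((Real.sqrt (1 - theta K ^ 2) / Real.sqrt ((K : ℝ) - 1) : ℝ) : ℂ) •
        ∑ P ∈ Finset.univ.filter (fun P => P ≠ Q), EuclideanSpace.single P (1 : ℂ))

/-- `ν_Q = √(2(K−1)/K) · ( √(1−θ²)·e_Q + (θ/√(K−1)) · Σ_{P ≠ Q} e_P )` in `ℂ^K`. -/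
noncomputable def nuVec (K : ℕ) (Q : Fin K) : EuclideanSpace ℂ (Fin K) :=
  ((Real.sqrt (2 * ((K : ℝ) - 1) / K) : ℝ) : ℂ) •
    (((Real.sqrt (1 - theta K ^ 2) : ℝ) : ℂ) • EuclideanSpace.single Q (1 : ℂ)
      + ((theta K / Real.sqrt ((K : ℝ) - 1) : ℝ) : ℂ) •
        ∑ P ∈ Finset.univ.filter (fun P => P ≠ Q), EuclideanSpace.single P (1 : ℂ))

/-!
Each of `μ_Q`, `ν_P` takes one value at coordinate `Q` (resp. `P`) and another constant value
elsewhere, so `⟨μ_Q, ν_P⟩` is an explicit expression in `θ`, `√(1 - θ²)`, `√(K - 1)` and `K`.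
For `Q = P` it vanishes by `√(K - 1)² = K - 1` alone; for `Q ≠ P` it reduces to `1` using
`θ √(1 - θ²) = (K - 2) / (2K)` and `(1 - θ²) - θ² = 2 √(K - 1) / K`.
-/

open scoped ComplexConjugate
open Finset

section ConstantOffOneCoordinate

variable {𝕜 ι : Type*} [RCLike 𝕜] [Fintype ι] [DecidableEq ι]

lemma smul_single_add_smul_sum_ne_apply (Q R : ι) (α β : 𝕜) :
    (α • EuclideanSpace.single Q (1 : 𝕜)
      + β • ∑ P ∈ univ.filter (fun P => P ≠ Q), EuclideanSpace.single P (1 : 𝕜)) R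
      = β + if R = Q then α - β else 0 := by
  by_cases h : R = Q
  · subst h; simp
  · simp [h]

lemma inner_smul_single_add_smul_sum_ne (Q P : ι) (α β γ δ : 𝕜) :
    ⟪α • EuclideanSpace.single Q (1 : 𝕜)
        + β • ∑ R ∈ univ.filter (fun R => R ≠ Q), EuclideanSpace.single R (1 : 𝕜),
      γ • EuclideanSpace.single P (1 : 𝕜)
        + δ • ∑ R ∈ univ.filter (fun R => R ≠ P), EuclideanSpace.single R (1 : 𝕜)⟫_𝕜
      = Fintype.card ι * conj β * δ + conj β * (γ - δ) + conj (α - β) * δ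
        + if Q = P then conj (α - β) * (γ - δ) else 0 := by
  simp only [PiLp.inner_apply, smul_single_add_smul_sum_ne_apply, RCLike.inner_apply, map_add,
    apply_ite (starRingEnd 𝕜), map_zero]
  simp only [mul_add, add_mul, ite_mul, mul_ite, zero_mul, mul_zero, sum_add_distrib, sum_ite_eq',
    mem_univ, if_true, sum_const, card_univ, nsmul_eq_mul]
  split_ifs <;> ring

end ConstantOffOneCoordinate

lemma sqrt_sub_one_div_le_half (K : ℕ) : √((K : ℝ) - 1) / K ≤ 1 / 2 := by
  rcases K.eq_zero_or_pos with rfl | hK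
  · simp
  have hK' : (0 : ℝ) < K := by exact_mod_cast hK
  rw [div_le_iff₀ hK', Real.sqrt_le_iff]
  exact ⟨by positivity, by nlinarith [sq_nonneg ((K : ℝ) - 2)]⟩

lemma theta_sq (K : ℕ) : theta K ^ 2 = 1 / 2 - √((K : ℝ) - 1) / K :=
  Real.sq_sqrt (sub_nonneg.2 (sqrt_sub_one_div_le_half K))

lemma sqrt_one_sub_theta_sq_sq (K : ℕ) :
    √(1 - theta K ^ 2) ^ 2 = 1 / 2 + √((K : ℝ) - 1) / K := by
  rw [Real.sq_sqrt, theta_sq]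
  · ring
  · rw [theta_sq]
    linarith [sqrt_sub_one_div_le_half K, show 0 ≤ √((K : ℝ) - 1) / K by positivity]

lemma theta_mul_sqrt_one_sub_theta_sq {K : ℕ} (hK : 2 ≤ K) :
    theta K * √(1 - theta K ^ 2) = ((K : ℝ) - 2) / (2 * K) := by
  have hK' : (2 : ℝ) ≤ K := by exact_mod_cast hK
  have hs : √((K : ℝ) - 1) ^ 2 = K - 1 := Real.sq_sqrt (by linarith)
  have hθ : 0 ≤ theta K * √(1 - theta K ^ 2) :=
    mul_nonneg (Real.sqrt_nonneg _) (Real.sqrt_nonneg _)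
  rw [← Real.sqrt_sq hθ,
    ← Real.sqrt_sq (div_nonneg (by linarith) (by linarith) : (0 : ℝ) ≤ (K - 2) / (2 * K)),
    mul_pow, sqrt_one_sub_theta_sq_sq, theta_sq]
  congr 1
  field_simp
  linear_combination (-4 : ℝ) * hs

/-- For every `Q, P ∈ {0, …, K−1}`, `⟨μ_Q, ν_P⟩ = 1 − δ_{Q,P}`: the inner product is `0`
when `Q = P` and `1` when `Q ≠ P`. -/
theorem stmt3 (K : ℕ) (hK : 2 ≤ K) (Q P : Fin K) :
    ⟪muVec K Q, nuVec K P⟫_ℂ = 1 - if Q = P then 1 else 0 := by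
  have hK' : (2 : ℝ) ≤ K := by exact_mod_cast hK
  rw [muVec, nuVec, inner_smul_left, inner_smul_right, inner_smul_single_add_smul_sum_ne,
    Fintype.card_fin]
  set a := theta K
  set b := √(1 - a ^ 2)
  set s := √((K : ℝ) - 1)
  set c := √(2 * ((K : ℝ) - 1) / K)
  have hs : s ^ 2 = K - 1 := Real.sq_sqrt (by linarith)
  have hs0 : s ≠ 0 := (Real.sqrt_pos.2 (by linarith)).ne'
  have hc : c ^ 2 = 2 * (K - 1) / K := Real.sq_sqrt (div_nonneg (by linarith) (by linarith))
  split_ifs with h <;>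
    simp only [← Complex.ofReal_sub, ← Complex.ofReal_mul, ← Complex.ofReal_add,
      ← Complex.ofReal_natCast, Complex.conj_ofReal, add_zero, sub_self, sub_zero,
      Complex.ofReal_eq_zero, Complex.ofReal_eq_one]
  · field_simp
    linear_combination (-c ^ 2 * a * b) * hs
  · have hab : a * b = (K - 2) / (2 * K) := theta_mul_sqrt_one_sub_theta_sq hK
    have hba : b ^ 2 - a ^ 2 = 2 * s / K := by
      rw [sqrt_one_sub_theta_sq_sq, theta_sq]; ring
    have key : c ^ 2 * (s * (b ^ 2 - a ^ 2) + (K - 2) * (a * b)) = s ^ 2 := by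
      rw [hc, hba, hab]
      field_simp
      linear_combination (-((K : ℝ) - 2) ^ 2) * hs
    field_simp
    linear_combination key
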